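/- Let H be a real Hilbert space, F : H → H a (1/L)-cocoercive map (L > 0), and B : H ⇒ H maximal monotone. Let {z_k}, {w_k}, {z̃_k}, {λ_k}, {α_k} be generated by Algorithm 4 (inertial under-relaxed forward-backward method) with parameters α ∈ [0,1), σ ∈ (0,1), τ ∈ (0,1], and define ε_k := L‖z̃_k − w_{k−1}‖²/4 and v_k := (w_{k−1} − z̃_k)/λ_k for k ≥ 1. Then for all k ≥ 1: v_k ∈ F^{ε_k}(z̃_k) + B(z̃_k) ⊆ (F+B)^{ε_k}(z̃_k), λ_k v_k + z̃_k − w_{k−1} = 0, 2λ_k ε_k ≤ σ²‖z̃_k − w_{k−1}‖², and z_k = w_{k−1} − τλ_k v_k; i.e., Algorithm 4 is a special instance of Algorithm 1 (inertial under-relaxed HPE) applied to T := F + B. -/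

import Mathlib

/-!
Along the forward step `F` is evaluated at `w` instead of at the resolvent point `z̃`; by
cocoercivity and Young's inequality `a t ≤ t² / L + L a² / 4`, this costs exactly the enlargement
`ε = L‖z̃ − w‖² / 4` of `F` at `z̃`. The backward step then puts `v − F w` in `B z̃`, and adding a
monotone operator to an `ε`-enlargement stays inside the `ε`-enlargement of the sum. With this `ε`
the HPE error criterion reduces to `λ L ≤ 2σ²`, and the relative error `λ v + z̃ − w` vanishes.
-/

open Filter Finset Topology Pointwise
open scoped RealInnerProductSpace

def IsMonotoneOp {H : Type*} [NormedAddCommGroup H] [InnerProductSpace ℝ H]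
    (T : H → Set H) : Prop :=
  ∀ ⦃z z' v v' : H⦄, v ∈ T z → v' ∈ T z' → 0 ≤ ⟪z - z', v - v'⟫

def IsMaximalMonotoneOp {H : Type*} [NormedAddCommGroup H] [InnerProductSpace ℝ H]
    (T : H → Set H) : Prop :=
  IsMonotoneOp T ∧ ∀ S : H → Set H, IsMonotoneOp S → (∀ z, T z ⊆ S z) → ∀ z, S z ⊆ T z

/-- The ε-enlargement `T^ε` of a set-valued operator `T`. -/
def enl {H : Type*} [NormedAddCommGroup H] [InnerProductSpace ℝ H]
    (T : H → Set H) (ε : ℝ) (z : H) : Set H :=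
  {v | ∀ z' v', v' ∈ T z' → ⟪z - z', v - v'⟫ ≥ -ε}

section Enlargement

variable {H : Type*} [NormedAddCommGroup H] [InnerProductSpace ℝ H]

theorem apply_mem_enl_of_cocoercive {F : H → H} {L : ℝ} (hL : 0 < L)
    (hF : ∀ x y : H, ⟪x - y, F x - F y⟫ ≥ (1 / L) * ‖F x - F y‖ ^ 2) (w z : H) :
    F w ∈ enl (fun x => ({F x} : Set H)) (L * ‖z - w‖ ^ 2 / 4) z := by
  rintro z' _ rfl
  set a := ‖z - w‖
  set t := ‖F w - F z'‖
  have hcoco : (1 / L) * t ^ 2 ≤ ⟪w - z', F w - F z'⟫ := hF w z'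
  have hcs : -(a * t) ≤ ⟪z - w, F w - F z'⟫ := neg_le_of_abs_le (abs_real_inner_le_norm _ _)
  have hyoung : a * t ≤ (1 / L) * t ^ 2 + L * a ^ 2 / 4 := by
    have hsq : L * ((1 / L) * t ^ 2 + L * a ^ 2 / 4 - a * t) = (t - L * a / 2) ^ 2 := by
      field_simp; ring
    nlinarith [sq_nonneg (t - L * a / 2)]
  calc ⟪z - z', F w - F z'⟫ = ⟪w - z', F w - F z'⟫ + ⟪z - w, F w - F z'⟫ := by
        rw [← inner_add_left, sub_add_sub_cancel']
    _ ≥ -(L * a ^ 2 / 4) := by linarith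

theorem mem_enl_add_of_sub_mem {F : H → H} {B : H → Set H} (hB : IsMonotoneOp B)
    {ε : ℝ} {z u v : H} (hu : u ∈ enl (fun x => ({F x} : Set H)) ε z) (hv : v - u ∈ B z) :
    v ∈ enl (fun x => {y : H | y - F x ∈ B x}) ε z := by
  intro z' v' hv'
  have hsplit : v - v' = (u - F z') + ((v - u) - (v' - F z')) := by abel
  rw [hsplit, inner_add_right]
  linarith [hu z' (F z') rfl, hB hv hv']

theorem inv_smul_sub_apply_mem_of_mem_smul {F : H → H} {B : H → Set H} {lam : ℝ}
    (hlam : lam ≠ 0) {w z : H} (h : w - lam • F w - z ∈ lam • B z) :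
    lam⁻¹ • (w - z) - F w ∈ B z := by
  rw [Set.mem_smul_set_iff_inv_smul_mem₀ hlam, smul_sub, smul_sub, inv_smul_smul₀ hlam] at h
  rwa [smul_sub, ← sub_right_comm]

end Enlargement

/-- The operator `x ↦ {u | u − F x ∈ B x}` is `F + B`. -/
theorem stmt19_general
    {H : Type*} [NormedAddCommGroup H] [InnerProductSpace ℝ H]
    (F : H → H) (L : ℝ) (hL : 0 < L)
    (hcoco : ∀ x y : H, ⟪x - y, F x - F y⟫ ≥ (1 / L) * ‖F x - F y‖ ^ 2)
    (B : H → Set H) (hB : IsMaximalMonotoneOp B)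
    (σ τ : ℝ)
    (z w ztil v : ℕ → H) (lam ε : ℕ → ℝ)
    (hlam : ∀ k, 1 ≤ k → 0 < lam k ∧ lam k ≤ 2 * σ ^ 2 / L)
    (hres : ∀ k, 1 ≤ k →
      w (k - 1) - lam k • F (w (k - 1)) - ztil k ∈ lam k • B (ztil k))
    (hz : ∀ k, 1 ≤ k → z k = (1 - τ) • w (k - 1) + τ • ztil k)
    (hε : ∀ k, 1 ≤ k → ε k = L * ‖ztil k - w (k - 1)‖ ^ 2 / 4)
    (hv : ∀ k, 1 ≤ k → v k = (lam k)⁻¹ • (w (k - 1) - ztil k)) :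
    ∀ k, 1 ≤ k →
      (∃ u ∈ enl (fun x => ({F x} : Set H)) (ε k) (ztil k), v k - u ∈ B (ztil k)) ∧
      v k ∈ enl (fun x => {u : H | u - F x ∈ B x}) (ε k) (ztil k) ∧
      lam k • v k + ztil k - w (k - 1) = 0 ∧
      2 * lam k * ε k ≤ σ ^ 2 * ‖ztil k - w (k - 1)‖ ^ 2 ∧
      z k = w (k - 1) - (τ * lam k) • v k := by
  intro k hk
  obtain ⟨hlam0, hlamle⟩ := hlam k hk
  have hlv : lam k • v k = w (k - 1) - ztil k := by rw [hv k hk, smul_inv_smul₀ hlam0.ne']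
  have hu := apply_mem_enl_of_cocoercive hL hcoco (w (k - 1)) (ztil k)
  rw [← hε k hk] at hu
  have hb : v k - F (w (k - 1)) ∈ B (ztil k) :=
    hv k hk ▸ inv_smul_sub_apply_mem_of_mem_smul hlam0.ne' (hres k hk)
  refine ⟨⟨_, hu, hb⟩, mem_enl_add_of_sub_mem hB.1 hu hb, by rw [hlv]; abel, ?_, ?_⟩
  · have hlamL : lam k * L ≤ 2 * σ ^ 2 := (le_div_iff₀ hL).mp hlamle
    rw [hε k hk]
    nlinarith [sq_nonneg ‖ztil k - w (k - 1)‖]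
  · rw [hz k hk, mul_smul, hlv]
    module

/-- Algorithm 4 (inertial under-relaxed forward-backward method), with
`ε_k := L‖z̃_k − w_{k−1}‖²/4` and `v_k := (w_{k−1} − z̃_k)/λ_k`, is a special instance of
Algorithm 1 applied to `T := F + B` (the operator `x ↦ {u | u − F x ∈ B x}`).  Here `F`,
viewed as the set-valued map `x ↦ {F x}`, has enlargement `F^ε = enl (fun x => {F x}) ε`.
Indexing convention: `z k` is the paper's `z_k` for `k ≥ 0`, the paper's `z_{−1} = z₀` being
encoded by truncated subtraction; the resolvent step is encoded as
`w_{k−1} − λ_k F(w_{k−1}) − z̃_k ∈ λ_k B(z̃_k)`. -/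
theorem stmt19
    {H : Type*} [NormedAddCommGroup H] [InnerProductSpace ℝ H] [CompleteSpace H]
    (F : H → H) (L : ℝ) (hL : 0 < L)
    (hcoco : ∀ x y : H, ⟪x - y, F x - F y⟫ ≥ (1 / L) * ‖F x - F y‖ ^ 2)
    (B : H → Set H) (hB : IsMaximalMonotoneOp B)
    (α σ τ : ℝ) (hα0 : 0 ≤ α) (hα1 : α < 1) (hσ0 : 0 < σ) (hσ1 : σ < 1)
    (hτ0 : 0 < τ) (hτ1 : τ ≤ 1)
    (z w ztil v : ℕ → H) (lam αs ε : ℕ → ℝ)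
    (hαs : ∀ k, 0 ≤ αs k ∧ αs k ≤ α)
    (hw : ∀ k, w k = z k + αs k • (z k - z (k - 1)))
    (hlam : ∀ k, 1 ≤ k → 0 < lam k ∧ lam k ≤ 2 * σ ^ 2 / L)
    (hres : ∀ k, 1 ≤ k →
      w (k - 1) - lam k • F (w (k - 1)) - ztil k ∈ lam k • B (ztil k))
    (hz : ∀ k, 1 ≤ k → z k = (1 - τ) • w (k - 1) + τ • ztil k)
    (hε : ∀ k, 1 ≤ k → ε k = L * ‖ztil k - w (k - 1)‖ ^ 2 / 4)
    (hv : ∀ k, 1 ≤ k → v k = (lam k)⁻¹ • (w (k - 1) - ztil k)) :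
    ∀ k, 1 ≤ k →
      (∃ u ∈ enl (fun x => ({F x} : Set H)) (ε k) (ztil k), v k - u ∈ B (ztil k)) ∧
      v k ∈ enl (fun x => {u : H | u - F x ∈ B x}) (ε k) (ztil k) ∧
      lam k • v k + ztil k - w (k - 1) = 0 ∧
      2 * lam k * ε k ≤ σ ^ 2 * ‖ztil k - w (k - 1)‖ ^ 2 ∧
      z k = w (k - 1) - (τ * lam k) • v k :=
  stmt19_general F L hL hcoco B hB σ τ z w ztil v lam ε hlam hres hz hε hv
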